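/- arXiv:2209.01446 — 3 statements merged into one kernel-verified Lean document; each statement's English description precedes it below -/
import Mathlib

section
/- Suppose Ω ⊆ ℝᵈ is a bounded open set with the κ₀ inner/outer density property: for all x₀ ∈ ∂Ω and 0 < r ≤ |Ω|^{1/d}, one has κ₀ ≤ |Ω ∩ B_r(x₀)|/|B_r(x₀)| ≤ 1 - κ₀. Then for every z ∈ Ω and r > 0, |B_r(z) ∩ Ω| ≤ C(d) κ₀^{-1} |B_{r/2}(z) ∩ Ω|, where C(d) depends only on the dimension d. -/
/-!
Put `t = min (r/4) |Ω|^{1/d}`. Either `B_t(z) ⊆ Ω`, or the connected ball `B_t(z)` meets `∂Ω` at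
some `x₀`; then `B_t(x₀) ⊆ B_{r/2}(z)` and the lower density bound applies at `x₀` because
`t ≤ |Ω|^{1/d}`. Either way `|B_{r/2}(z) ∩ Ω| ≥ κ₀ |B_t|`. On the other hand
`|B_r(z) ∩ Ω| ≤ min (|B_r|, |Ω|) ≤ (4^d + |B_1|⁻¹) |B_t|`, since `|B_r| = 4^d |B_{r/4}|` and
`|Ω| = |B_1|⁻¹ |B_{|Ω|^{1/d}}|`.
-/

open MeasureTheory Metric

open Module Set
open scoped ENNReal

theorem IsPreconnected.inter_frontier_nonempty_of_not_subset {X : Type*} [TopologicalSpace X]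
    {s u : Set X} (hs : IsPreconnected s) (hu : IsOpen u) (hsu : (s ∩ u).Nonempty)
    (hnot : ¬s ⊆ u) : (s ∩ frontier u).Nonempty := by
  by_contra h
  refine hnot (hs.subset_of_closure_inter_subset hu hsu fun x ⟨hxu, hxs⟩ => ?_)
  rw [closure_eq_self_union_frontier] at hxu
  exact hxu.resolve_right fun hxf => h ⟨x, hxs, hxf⟩

section Density

variable {E : Type*} [NormedAddCommGroup E] [NormedSpace ℝ E] [MeasurableSpace E]
  [ProperSpace E] (μ : Measure E) [IsFiniteMeasureOnCompacts μ]

theorem exists_measureReal_ball_le_of_frontier_density {Ω : Set E} {κ t s : ℝ} {z : E}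
    (hΩ : IsOpen Ω) (hκ : κ ≤ 1)
    (hdens : ∀ x ∈ frontier Ω, κ * μ.real (ball x t) ≤ μ.real (Ω ∩ ball x t))
    (hz : z ∈ Ω) (ht : 0 < t) (hts : 2 * t ≤ s) :
    ∃ x, κ * μ.real (ball x t) ≤ μ.real (ball z s ∩ Ω) := by
  by_cases hsub : ball z t ⊆ Ω
  · refine ⟨z, ?_⟩
    calc κ * μ.real (ball z t) ≤ μ.real (ball z t) :=
          mul_le_of_le_one_left measureReal_nonneg hκ
      _ ≤ μ.real (ball z s ∩ Ω) :=
          measureReal_mono (subset_inter (ball_subset_ball (by linarith)) hsub)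
  · obtain ⟨x, hxz, hx⟩ := (convex_ball z t).isPreconnected.inter_frontier_nonempty_of_not_subset
      hΩ ⟨z, mem_ball_self ht, hz⟩ hsub
    have hball : ball x t ⊆ ball z s := ball_subset_ball' (by rw [mem_ball] at hxz; linarith)
    exact ⟨x, (hdens x hx).trans <| measureReal_mono fun y ⟨hyΩ, hy⟩ => ⟨hball hy, hyΩ⟩⟩

end Density

theorem measureReal_ball_pos {X : Type*} [PseudoMetricSpace X] [ProperSpace X] [MeasurableSpace X]
    (μ : Measure X) [μ.IsOpenPosMeasure] [IsFiniteMeasureOnCompacts μ] (x : X) {r : ℝ}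
    (hr : 0 < r) : 0 < μ.real (ball x r) :=
  ENNReal.toReal_pos (measure_ball_pos μ x hr).ne' measure_ball_lt_top.ne

section Volume

variable {E : Type*} [NormedAddCommGroup E] [NormedSpace ℝ E] [MeasurableSpace E] [BorelSpace E]
  [FiniteDimensional ℝ E] (μ : Measure E) [μ.IsAddHaarMeasure]

theorem addHaar_real_ball_of_pos (x : E) {r : ℝ} (hr : 0 < r) :
    μ.real (ball x r) = r ^ finrank ℝ E * μ.real (ball 0 1) := by
  rw [measureReal_def, Measure.addHaar_ball_of_pos μ x hr, ENNReal.toReal_mul,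
    ENNReal.toReal_ofReal (by positivity), measureReal_def]

theorem measureReal_ball_inter_le {Ω : Set E} {r R : ℝ} (z x : E) (hr : 0 < r) (hR : 0 < R)
    (hΩ : μ Ω ≠ ∞) (hΩR : μ.real Ω ≤ R ^ finrank ℝ E) :
    μ.real (ball z r ∩ Ω)
      ≤ (4 ^ finrank ℝ E + (μ.real (ball 0 1))⁻¹) * μ.real (ball x (min (r / 4) R)) := by
  set n := finrank ℝ E
  set ω := μ.real (ball (0 : E) 1)
  have hω : 0 < ω := measureReal_ball_pos μ 0 one_pos
  rw [addHaar_real_ball_of_pos μ x (lt_min (by positivity) hR)]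
  rcases min_cases (r / 4) R with ⟨hmin, -⟩ | ⟨hmin, -⟩ <;> rw [hmin]
  · calc μ.real (ball z r ∩ Ω) ≤ μ.real (ball z r) := measureReal_mono inter_subset_left
      _ = 4 ^ n * ((r / 4) ^ n * ω) := by
        rw [addHaar_real_ball_of_pos μ z hr, ← mul_assoc, ← mul_pow,
          mul_div_cancel₀ r four_ne_zero]
      _ ≤ _ := by gcongr; exact le_add_of_nonneg_right (by positivity)
  · calc μ.real (ball z r ∩ Ω) ≤ μ.real Ω := measureReal_mono inter_subset_right hΩ
      _ ≤ R ^ n := hΩR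
      _ = ω⁻¹ * (R ^ n * ω) := by field_simp
      _ ≤ _ := by gcongr; exact le_add_of_nonneg_left (by positivity)

end Volume

/-- **Doubling estimate from inner/outer boundary density bounds.**
If a bounded open set `Ω ⊆ ℝᵈ` satisfies `κ₀ ≤ |Ω ∩ B_r(x₀)|/|B_r(x₀)| ≤ 1 - κ₀`
for all `x₀ ∈ ∂Ω` and `0 < r ≤ |Ω|^{1/d}`, then for all `z ∈ Ω` and `r > 0`,
`|B_r(z) ∩ Ω| ≤ C(d) κ₀⁻¹ |B_{r/2}(z) ∩ Ω|` with `C(d)` dimensional. -/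
theorem doubling_from_density (d : ℕ) (hd : 0 < d) :
    ∃ C : ℝ, 0 < C ∧
      ∀ (Ω : Set (EuclideanSpace ℝ (Fin d))) (κ₀ : ℝ),
        IsOpen Ω → Bornology.IsBounded Ω → 0 < κ₀ → κ₀ ≤ 1 / 2 →
        (∀ x₀ ∈ frontier Ω, ∀ r : ℝ, 0 < r → r ≤ (volume Ω).toReal ^ ((1 : ℝ) / d) →
          κ₀ ≤ (volume (Ω ∩ Metric.ball x₀ r)).toReal / (volume (Metric.ball x₀ r)).toReal ∧
          (volume (Ω ∩ Metric.ball x₀ r)).toReal / (volume (Metric.ball x₀ r)).toReal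
            ≤ 1 - κ₀) →
        ∀ z ∈ Ω, ∀ r : ℝ, 0 < r →
          (volume (Metric.ball z r ∩ Ω)).toReal
            ≤ C * κ₀⁻¹ * (volume (Metric.ball z (r / 2) ∩ Ω)).toReal := by
  refine ⟨4 ^ d + (volume.real (ball (0 : EuclideanSpace ℝ (Fin d)) 1))⁻¹, by positivity, ?_⟩
  intro Ω κ₀ hΩ hΩb hκ₀ hκ₀_le hdens z hz r hr
  simp only [← measureReal_def] at hdens ⊢
  have hΩfin : volume Ω ≠ ∞ := hΩb.measure_lt_top.ne
  set R := volume.real Ω ^ ((1 : ℝ) / d) with hR_def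
  have hR : 0 < R := Real.rpow_pos_of_pos
    (ENNReal.toReal_pos (hΩ.measure_pos volume ⟨z, hz⟩).ne' hΩfin) _
  have hRd : volume.real Ω = R ^ d := by
    rw [hR_def, one_div, Real.rpow_inv_natCast_pow measureReal_nonneg hd.ne']
  set t := min (r / 4) R
  have ht : 0 < t := lt_min (by positivity) hR
  obtain ⟨x, hx⟩ := exists_measureReal_ball_le_of_frontier_density volume (s := r / 2) hΩ
    (by linarith) (fun x₀ hx₀ => (le_div_iff₀ (measureReal_ball_pos volume x₀ ht)).1
      (hdens x₀ hx₀ t ht (min_le_right _ _)).1) hz ht (by linarith [min_le_left (r / 4) R])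
  have hbound := measureReal_ball_inter_le volume z x hr hR hΩfin
    (by rw [finrank_euclideanSpace_fin, hRd])
  rw [finrank_euclideanSpace_fin] at hbound
  calc volume.real (ball z r ∩ Ω) ≤ _ := hbound
    _ ≤ _ * (κ₀⁻¹ * volume.real (ball z (r / 2) ∩ Ω)) := by
      gcongr
      rwa [le_inv_mul_iff₀ hκ₀]
    _ = _ := by ring
end

section
/- Let Ω, Ω' ⊆ ℝᵈ be bounded open sets with |Ω| = |Ω'|, both satisfying the κ₀ inner/outer density property (κ₀ ≤ |Ω ∩ B_r(x₀)|/|B_r| ≤ 1 - κ₀ for all x₀ ∈ ∂Ω, 0 < r ≤ |Ω|^{1/d}, and similarly for Ω'). If |Ω Δ Ω'| < κ₀ |B₁| min(|Ω|, |Ω'|), then the Hausdorff distance between the boundaries satisfies d_H(∂Ω, ∂Ω') ≤ C(d) κ₀^{-1/d} |Ω Δ Ω'|^{1/d}. -/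
open MeasureTheory Metric
open scoped symmDiff

private lemma aux_infDist (d : ℕ) (hd : 0 < d)
    (Ω Ω' : Set (EuclideanSpace ℝ (Fin d))) (κ₀ : ℝ)
    (hΩo : IsOpen Ω) (hΩ'o : IsOpen Ω') (hΩ'b : Bornology.IsBounded Ω')
    (hΩb : Bornology.IsBounded Ω)
    (hκ : 0 < κ₀)
    (hvol : volume Ω = volume Ω')
    (hdens : ∀ x₀ ∈ frontier Ω, ∀ r : ℝ, 0 < r → r ≤ (volume Ω).toReal ^ ((1 : ℝ) / d) →
          κ₀ ≤ (volume (Ω ∩ Metric.ball x₀ r)).toReal / (volume (Metric.ball x₀ r)).toReal ∧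
          (volume (Ω ∩ Metric.ball x₀ r)).toReal / (volume (Metric.ball x₀ r)).toReal
            ≤ 1 - κ₀)
    (hsmall : (volume (Ω ∆ Ω')).toReal
          < κ₀ * (volume (Metric.ball (0 : EuclideanSpace ℝ (Fin d)) 1)).toReal *
            min (volume Ω).toReal (volume Ω').toReal)
    (x₀ : EuclideanSpace ℝ (Fin d)) (hx₀ : x₀ ∈ frontier Ω) :
    Metric.infDist x₀ (frontier Ω') ≤
      ((volume (Ω ∆ Ω')).toReal /
        (κ₀ * (volume (Metric.ball (0 : EuclideanSpace ℝ (Fin d)) 1)).toReal)) ^ ((1 : ℝ) / d) := by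
  haveI : Nonempty (Fin d) := ⟨⟨0, hd⟩⟩
  set b := (volume (Metric.ball (0 : EuclideanSpace ℝ (Fin d)) 1)).toReal with hbdef
  have hb : 0 < b :=
    ENNReal.toReal_pos (measure_ball_pos _ _ one_pos).ne' measure_ball_lt_top.ne
  set x := (volume (Ω ∆ Ω')).toReal with hxdef
  have hx0 : 0 ≤ x := ENNReal.toReal_nonneg
  set M : ℝ := (x / (κ₀ * b)) ^ ((1 : ℝ) / d) with hMdef
  have hM0 : 0 ≤ M := Real.rpow_nonneg (by positivity) _
  by_contra hcon
  push_neg at hcon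
  -- hcon : M < infDist x₀ (frontier Ω')
  have hminpos : 0 < min (volume Ω).toReal (volume Ω').toReal := by
    by_contra hm
    push_neg at hm
    have : κ₀ * b * min (volume Ω).toReal (volume Ω').toReal ≤ 0 :=
      mul_nonpos_of_nonneg_of_nonpos (by positivity) hm
    linarith
  have hΩpos : 0 < (volume Ω).toReal := lt_of_lt_of_le hminpos (min_le_left _ _)
  set L : ℝ := (volume Ω).toReal ^ ((1 : ℝ) / d) with hLdef
  have hL : 0 < L := Real.rpow_pos_of_pos hΩpos _
  set r : ℝ := min (Metric.infDist x₀ (frontier Ω')) L with hrdef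
  have hr0 : 0 < r := lt_min (hM0.trans_lt hcon) hL
  have hrL : r ≤ L := min_le_right _ _
  set B := Metric.ball x₀ r with hBdef
  have hdisj : ∀ y ∈ B, y ∉ frontier Ω' := by
    intro y hy hyF
    have h1 : Metric.infDist x₀ (frontier Ω') ≤ dist x₀ y :=
      Metric.infDist_le_dist_of_mem hyF
    have h2 : dist y x₀ < r := Metric.mem_ball.mp hy
    rw [dist_comm] at h2
    have := min_le_left (Metric.infDist x₀ (frontier Ω')) L
    linarith
  have hsub : B ⊆ Ω' ∪ (closure Ω')ᶜ := by
    intro y hy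
    by_cases hyc : y ∈ closure Ω'
    · left
      have hint : y ∈ interior Ω' := by
        by_contra h'
        exact hdisj y hy ⟨hyc, h'⟩
      rwa [hΩ'o.interior_eq] at hint
    · exact Or.inr hyc
  have hcases := (convex_ball x₀ r).isPreconnected.subset_or_subset hΩ'o
    isClosed_closure.isOpen_compl
    (disjoint_compl_right.mono_left subset_closure) hsub
  -- volume of the ball
  have hBvol : (volume B).toReal = r ^ d * b := by
    rw [hBdef, Measure.addHaar_ball _ _ hr0.le, ENNReal.toReal_mul,
      ENNReal.toReal_ofReal (by positivity)]
    congr 2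
    simp [finrank_euclideanSpace_fin]
  have hBfin : volume B ≠ ⊤ := measure_ball_lt_top.ne
  have hBpos : 0 < (volume B).toReal := by
    rw [hBvol]; positivity
  have hΔfin : volume (Ω ∆ Ω') ≠ ⊤ := by
    have : Ω ∆ Ω' ⊆ Ω ∪ Ω' := symmDiff_le_sup
    exact ((measure_mono this).trans_lt (hΩb.union hΩ'b).measure_lt_top).ne
  obtain ⟨hlow, hhigh⟩ := hdens x₀ hx₀ r hr0 hrL
  have hlow' : κ₀ * (volume B).toReal ≤ (volume (Ω ∩ B)).toReal :=
    (le_div_iff₀ hBpos).mp hlow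
  have hhigh' : (volume (Ω ∩ B)).toReal ≤ (1 - κ₀) * (volume B).toReal :=
    (div_le_iff₀ hBpos).mp hhigh
  -- the key estimate
  have hkey : κ₀ * (volume B).toReal ≤ x := by
    rcases hcases with hBΩ' | hBcl
    · -- ball inside Ω'
      have hsubΔ : B \ Ω ⊆ Ω ∆ Ω' := by
        intro y hy
        rw [Set.mem_symmDiff]
        exact Or.inr ⟨hBΩ' hy.1, hy.2⟩
      have h1 : (volume (B \ Ω)).toReal ≤ x :=
        ENNReal.toReal_mono hΔfin (measure_mono hsubΔ)
      have h2 : volume (B ∩ Ω) + volume (B \ Ω) = volume B :=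
        measure_inter_add_diff B hΩo.measurableSet
      have h3 : (volume (B ∩ Ω)).toReal + (volume (B \ Ω)).toReal = (volume B).toReal := by
        rw [← ENNReal.toReal_add, h2]
        · exact ((measure_mono Set.inter_subset_left).trans_lt hBfin.lt_top).ne
        · exact ((measure_mono Set.diff_subset).trans_lt hBfin.lt_top).ne
      rw [Set.inter_comm] at h3
      linarith
    · -- ball disjoint from Ω'
      have hsubΔ : Ω ∩ B ⊆ Ω ∆ Ω' := by
        intro y hy
        rw [Set.mem_symmDiff]
        exact Or.inl ⟨hy.1, fun hy' => (hBcl hy.2) (subset_closure hy')⟩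
      have h1 : (volume (Ω ∩ B)).toReal ≤ x :=
        ENNReal.toReal_mono hΔfin (measure_mono hsubΔ)
      linarith
  rw [hBvol] at hkey
  -- two cases for r
  rcases min_cases (Metric.infDist x₀ (frontier Ω')) L with ⟨hreq, _⟩ | ⟨hreq, _⟩
  · -- r = infDist, so r > M
    have hMr : M < r := by rw [hrdef, hreq]; exact hcon
    have hMd : M ^ d = x / (κ₀ * b) := by
      rw [hMdef, ← Real.rpow_natCast ((x / (κ₀ * b)) ^ ((1 : ℝ) / d)) d,
        ← Real.rpow_mul (by positivity)]
      rw [one_div, inv_mul_cancel₀ (by exact_mod_cast hd.ne'), Real.rpow_one]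
    have hpow : M ^ d < r ^ d := by
      exact pow_lt_pow_left₀ hMr hM0 hd.ne'
    rw [hMd] at hpow
    have : x < κ₀ * (r ^ d * b) := by
      rw [div_lt_iff₀ (by positivity)] at hpow
      nlinarith
    linarith
  · -- r = L
    have hLd : L ^ d = (volume Ω).toReal := by
      rw [hLdef, ← Real.rpow_natCast ((volume Ω).toReal ^ ((1 : ℝ) / d)) d,
        ← Real.rpow_mul hΩpos.le]
      rw [one_div, inv_mul_cancel₀ (by exact_mod_cast hd.ne'), Real.rpow_one]
    have hmin : min (volume Ω).toReal (volume Ω').toReal = (volume Ω).toReal := by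
      rw [hvol, min_self]
    rw [hmin] at hsmall
    rw [hrdef, hreq, hLd] at hkey
    nlinarith

/-- **From closeness in measure to closeness in Hausdorff distance of the boundaries.**
If `Ω, Ω'` are bounded open sets of equal volume, both satisfying the `κ₀` inner/outer
density property, and `|Ω Δ Ω'| < κ₀|B₁| min(|Ω|,|Ω'|)`, then
`d_H(∂Ω, ∂Ω') ≤ C(d) κ₀^{-1/d} |Ω Δ Ω'|^{1/d}`. -/
theorem hausdorff_from_measure (d : ℕ) (hd : 0 < d) :
    ∃ C : ℝ, 0 < C ∧
      ∀ (Ω Ω' : Set (EuclideanSpace ℝ (Fin d))) (κ₀ : ℝ),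
        IsOpen Ω → Bornology.IsBounded Ω → IsOpen Ω' → Bornology.IsBounded Ω' →
        0 < κ₀ → κ₀ ≤ 1 / 2 →
        volume Ω = volume Ω' →
        (∀ x₀ ∈ frontier Ω, ∀ r : ℝ, 0 < r → r ≤ (volume Ω).toReal ^ ((1 : ℝ) / d) →
          κ₀ ≤ (volume (Ω ∩ Metric.ball x₀ r)).toReal / (volume (Metric.ball x₀ r)).toReal ∧
          (volume (Ω ∩ Metric.ball x₀ r)).toReal / (volume (Metric.ball x₀ r)).toReal
            ≤ 1 - κ₀) →
        (∀ x₀ ∈ frontier Ω', ∀ r : ℝ, 0 < r → r ≤ (volume Ω').toReal ^ ((1 : ℝ) / d) →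
          κ₀ ≤ (volume (Ω' ∩ Metric.ball x₀ r)).toReal / (volume (Metric.ball x₀ r)).toReal ∧
          (volume (Ω' ∩ Metric.ball x₀ r)).toReal / (volume (Metric.ball x₀ r)).toReal
            ≤ 1 - κ₀) →
        (volume (Ω ∆ Ω')).toReal
          < κ₀ * (volume (Metric.ball (0 : EuclideanSpace ℝ (Fin d)) 1)).toReal *
            min (volume Ω).toReal (volume Ω').toReal →
        Metric.hausdorffDist (frontier Ω) (frontier Ω')
          ≤ C * κ₀ ^ (-(1 : ℝ) / d) * (volume (Ω ∆ Ω')).toReal ^ ((1 : ℝ) / d) := by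
  haveI : Nonempty (Fin d) := ⟨⟨0, hd⟩⟩
  set b := (volume (Metric.ball (0 : EuclideanSpace ℝ (Fin d)) 1)).toReal with hbdef
  have hb : 0 < b :=
    ENNReal.toReal_pos (measure_ball_pos _ _ one_pos).ne' measure_ball_lt_top.ne
  refine ⟨b ^ (-(1 : ℝ) / d), Real.rpow_pos_of_pos hb _, ?_⟩
  intro Ω Ω' κ₀ hΩo hΩb hΩ'o hΩ'b hκ _ hvol hdens hdens' hsmall
  set x := (volume (Ω ∆ Ω')).toReal with hxdef
  have hx0 : 0 ≤ x := ENNReal.toReal_nonneg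
  have hsymm : Ω' ∆ Ω = Ω ∆ Ω' := symmDiff_comm Ω' Ω
  have hsmall' : (volume (Ω' ∆ Ω)).toReal
      < κ₀ * b * min (volume Ω').toReal (volume Ω).toReal := by
    rw [hsymm, min_comm]; exact hsmall
  have h1 := fun x₀ hx₀ => aux_infDist d hd Ω Ω' κ₀ hΩo hΩ'o hΩ'b hΩb hκ hvol hdens hsmall x₀ hx₀
  have h2 := fun x₀ hx₀ =>
    aux_infDist d hd Ω' Ω κ₀ hΩ'o hΩo hΩb hΩ'b hκ hvol.symm hdens' hsmall' x₀ hx₀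
  rw [hsymm] at h2
  set M : ℝ := (x / (κ₀ * b)) ^ ((1 : ℝ) / d) with hMdef
  have hM0 : 0 ≤ M := Real.rpow_nonneg (by positivity) _
  have hHD : Metric.hausdorffDist (frontier Ω) (frontier Ω') ≤ M :=
    Metric.hausdorffDist_le_of_infDist hM0 h1 h2
  have hMeq : M = b ^ (-(1 : ℝ) / d) * κ₀ ^ (-(1 : ℝ) / d) * x ^ ((1 : ℝ) / d) := by
    rw [hMdef, Real.div_rpow hx0 (by positivity), Real.mul_rpow hκ.le hb.le,
      neg_div, Real.rpow_neg hb.le, Real.rpow_neg hκ.le, div_eq_mul_inv, mul_inv]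
    ring
  rw [← hMeq]
  exact hHD
end

section
/- Let λ : 𝒜 → ℝ be a shape functional on a class 𝒜 of subsets of ℝᵈ closed under dilations, with volume |·|. Fix μ > 0 and σ ≥ 0, and suppose U₁, U₂ ∈ 𝒜 both minimize J_μ(V) = λ(V) + μ|V| with |U₁| < |U₂|, T = (|U₂|/|U₁|)^{1/d}, and the approximate dilation bounds λ(tU₁) ≤ t^{-2}λ(U₁) + σ t^{-2}|U₁|^{-2/d} hold for all t ∈ [1, T]. Let m ∈ (|U₁|, |U₂|), t = (m/|U₁|)^{1/d}, and suppose U* ∈ 𝒜 satisfies |U*| = m and λ(U*) ≤ λ(tU₁). Then J_μ(U*) ≤ max(J_μ(U₁), J_μ(U₂)) + 2σ|U₁|^{-2/d}, provided additionally that T^{-2}λ(U₁) + μT^d|U₁| ≤ J_μ(U₂) + σ|U₂|^{-2/d}. -/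
open MeasureTheory Set
open scoped Pointwise

/-!
Write `a = |U₁|` and `s = a^{-2/d}`. Comparing `U*` with the dilate `tU₁` (whose volume is
`tᵈ a = m`) and using the dilation bound gives `J(U*) ≤ f(t)`, where
`f(τ) = (λ(U₁) + σ s) τ⁻² + μ a τᵈ`. As a sum of nonnegative multiples of `τ⁻²` and `τᵈ`, `f` is
convex on `τ > 0`, so on `[1, T]` it is bounded by `max (f 1) (f T)`. Here `f 1 = J(U₁) + σ s`,
and the endpoint hypothesis together with `|U₂|^{-2/d} ≤ s` gives `f T ≤ J(U₂) + 2σ s`.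
-/

lemma convexOn_div_sq_add_mul_pow {A B : ℝ} (hA : 0 ≤ A) (hB : 0 ≤ B) (n : ℕ) :
    ConvexOn ℝ (Ioi 0) (fun τ : ℝ => A / τ ^ 2 + B * τ ^ n) := by
  have hpow : ConvexOn ℝ (Ioi (0 : ℝ)) (fun τ : ℝ => τ ^ n) :=
    (convexOn_pow n).subset Ioi_subset_Ici_self (convex_Ioi 0)
  refine (((convexOn_zpow (-2)).smul hA).add (hpow.smul hB)).congr fun τ _ => ?_
  simp [div_eq_mul_inv]

lemma div_sq_add_mul_pow_le_max {A B t T : ℝ} (hA : 0 ≤ A) (hB : 0 ≤ B) (n : ℕ)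
    (ht : t ∈ Icc 1 T) :
    A / t ^ 2 + B * t ^ n ≤ max (A + B) (A / T ^ 2 + B * T ^ n) := by
  have hT : 1 ≤ T := ht.1.trans ht.2
  have hseg : t ∈ segment ℝ 1 T := by rwa [segment_eq_Icc hT]
  simpa using (convexOn_div_sq_add_mul_pow hA hB n).le_on_segment
    (mem_Ioi.2 one_pos) (mem_Ioi.2 (one_pos.trans_le hT)) hseg

lemma rpow_div_mem_Icc {a m b z : ℝ} (ha : 0 < a) (ham : a ≤ m) (hmb : m ≤ b) (hz : 0 ≤ z) :
    (m / a) ^ z ∈ Icc 1 ((b / a) ^ z) :=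
  ⟨Real.one_le_rpow ((one_le_div ha).2 ham) hz,
    Real.rpow_le_rpow (div_pos (ha.trans_le ham) ha).le (by gcongr) hz⟩

theorem dilation_convexity_energy_deficit_general
    {d : ℕ} (hd : 0 < d)
    (𝒜 : Set (Set (EuclideanSpace ℝ (Fin d))))
    (lam : Set (EuclideanSpace ℝ (Fin d)) → ℝ)
    (hlamnn : ∀ U ∈ 𝒜, 0 ≤ lam U)
    (μ σ : ℝ) (hμ : 0 < μ) (hσ : 0 ≤ σ)
    (J : Set (EuclideanSpace ℝ (Fin d)) → ℝ)
    (hJ : ∀ V, J V = lam V + μ * (volume V).toReal)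
    (U₁ U₂ : Set (EuclideanSpace ℝ (Fin d)))
    (hU₁A : U₁ ∈ 𝒜)
    (hvol₁ : 0 < (volume U₁).toReal)
    (hvollt : (volume U₁).toReal < (volume U₂).toReal)
    (T : ℝ) (hT : T = ((volume U₂).toReal / (volume U₁).toReal) ^ ((1 : ℝ) / d))
    (hdilbound : ∀ t ∈ Set.Icc (1 : ℝ) T,
      lam (t • U₁)
        ≤ lam U₁ / t ^ 2 + σ * (volume U₁).toReal ^ (-(2 : ℝ) / d) / t ^ 2)
    (m : ℝ) (hm : m ∈ Set.Ioo (volume U₁).toReal (volume U₂).toReal)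
    (t : ℝ) (htt : t = (m / (volume U₁).toReal) ^ ((1 : ℝ) / d))
    (Ustar : Set (EuclideanSpace ℝ (Fin d)))
    (hUsvol : (volume Ustar).toReal = m)
    (hUslam : lam Ustar ≤ lam (t • U₁))
    (hend : lam U₁ / T ^ 2 + μ * T ^ d * (volume U₁).toReal
      ≤ J U₂ + σ * (volume U₂).toReal ^ (-(2 : ℝ) / d)) :
    J Ustar ≤ max (J U₁) (J U₂) + 2 * σ * (volume U₁).toReal ^ (-(2 : ℝ) / d) := by
  set a := (volume U₁).toReal
  set s := a ^ (-(2 : ℝ) / d)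
  have ht : t ∈ Icc 1 T := htt ▸ hT ▸ rpow_div_mem_Icc hvol₁ hm.1.le hm.2.le (by positivity)
  have htd : t ^ d = m / a := by
    rw [htt, one_div, Real.rpow_inv_natCast_pow (div_pos (hvol₁.trans hm.1) hvol₁).le hd.ne']
  have hs : (volume U₂).toReal ^ (-(2 : ℝ) / d) ≤ s :=
    Real.rpow_le_rpow_of_nonpos hvol₁ hvollt.le (by rw [neg_div]; exact neg_nonpos.2 (by positivity))
  have hs0 : 0 ≤ σ * s := mul_nonneg hσ (by positivity)
  have hJs : J Ustar ≤ (lam U₁ + σ * s) / t ^ 2 + μ * a * t ^ d := by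
    have hμm : μ * m = μ * a * t ^ d := by rw [htd]; field_simp
    rw [hJ, hUsvol, hμm, add_div]
    linarith [hUslam.trans (hdilbound t ht)]
  have hfT : σ * s / T ^ 2 ≤ σ * s := div_le_self hs0 (one_le_pow₀ (ht.1.trans ht.2))
  refine hJs.trans ((div_sq_add_mul_pow_le_max (add_nonneg (hlamnn U₁ hU₁A) hs0)
    (mul_pos hμ hvol₁).le d ht).trans (max_le ?_ ?_))
  · linarith [le_max_left (J U₁) (J U₂), hJ U₁]
  · rw [add_div]
    linarith [le_max_right (J U₁) (J U₂), mul_le_mul_of_nonneg_left hs hσ]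

/-- **Convexity/dilation argument at singular penalization values.**
If `U₁, U₂` both minimize `J_μ = λ + μ·vol` over a dilation-invariant class `𝒜`,
`|U₁| < |U₂|`, `T = (|U₂|/|U₁|)^{1/d}`, the approximate dilation bounds
`λ(tU₁) ≤ t⁻²λ(U₁) + σ t⁻²|U₁|^{-2/d}` hold for `t ∈ [1,T]`, and
`T⁻²λ(U₁) + μTᵈ|U₁| ≤ J_μ(U₂) + σ|U₂|^{-2/d}`, then any `U* ∈ 𝒜` with
`|U*| = m ∈ (|U₁|,|U₂|)`, `t = (m/|U₁|)^{1/d}`, and `λ(U*) ≤ λ(tU₁)` satisfies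
`J_μ(U*) ≤ max(J_μ(U₁), J_μ(U₂)) + 2σ|U₁|^{-2/d}`. -/
theorem dilation_convexity_energy_deficit
    {d : ℕ} (hd : 0 < d)
    (𝒜 : Set (Set (EuclideanSpace ℝ (Fin d))))
    (lam : Set (EuclideanSpace ℝ (Fin d)) → ℝ)
    (hdil : ∀ U ∈ 𝒜, ∀ t : ℝ, 0 < t → t • U ∈ 𝒜)
    (hlamnn : ∀ U ∈ 𝒜, 0 ≤ lam U)
    (μ σ : ℝ) (hμ : 0 < μ) (hσ : 0 ≤ σ)
    (J : Set (EuclideanSpace ℝ (Fin d)) → ℝ)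
    (hJ : ∀ V, J V = lam V + μ * (volume V).toReal)
    (U₁ U₂ : Set (EuclideanSpace ℝ (Fin d)))
    (hU₁A : U₁ ∈ 𝒜) (hU₂A : U₂ ∈ 𝒜)
    (hmin₁ : ∀ V ∈ 𝒜, J U₁ ≤ J V) (hmin₂ : ∀ V ∈ 𝒜, J U₂ ≤ J V)
    (hvol₁ : 0 < (volume U₁).toReal) (hvolfin : volume U₂ ≠ ⊤)
    (hvollt : (volume U₁).toReal < (volume U₂).toReal)
    (T : ℝ) (hT : T = ((volume U₂).toReal / (volume U₁).toReal) ^ ((1 : ℝ) / d))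
    (hdilbound : ∀ t ∈ Set.Icc (1 : ℝ) T,
      lam (t • U₁)
        ≤ lam U₁ / t ^ 2 + σ * (volume U₁).toReal ^ (-(2 : ℝ) / d) / t ^ 2)
    (m : ℝ) (hm : m ∈ Set.Ioo (volume U₁).toReal (volume U₂).toReal)
    (t : ℝ) (htt : t = (m / (volume U₁).toReal) ^ ((1 : ℝ) / d))
    (Ustar : Set (EuclideanSpace ℝ (Fin d))) (hUsA : Ustar ∈ 𝒜)
    (hUsvol : (volume Ustar).toReal = m)
    (hUslam : lam Ustar ≤ lam (t • U₁))
    (hend : lam U₁ / T ^ 2 + μ * T ^ d * (volume U₁).toReal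
      ≤ J U₂ + σ * (volume U₂).toReal ^ (-(2 : ℝ) / d)) :
    J Ustar ≤ max (J U₁) (J U₂) + 2 * σ * (volume U₁).toReal ^ (-(2 : ℝ) / d) :=
  dilation_convexity_energy_deficit_general hd 𝒜 lam hlamnn μ σ hμ hσ J hJ U₁ U₂ hU₁A hvol₁ hvollt T
    hT hdilbound m hm t htt Ustar hUsvol hUslam hend
end
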